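/- If G is a finite König–Egerváry graph, then the critical difference of G is zero if and only if G has a perfect matching. -/

import Mathlib

namespace KEPaper

open SimpleGraph

variable {V : Type*}

/-- `nbhd G S` is the set of vertices having a neighbor in `S`. -/
def nbhd (G : SimpleGraph V) (S : Set V) : Set V := {v | ∃ w ∈ S, G.Adj v w}

/-- `S` is an independent set of `G`: no two vertices of `S` are adjacent. -/
def IsIndep (G : SimpleGraph V) (S : Set V) : Prop :=
  S.Pairwise fun u v => ¬ G.Adj u v

/-- The independence number `α(G)`: maximum cardinality of an independent set. -/
noncomputable def indepNum (G : SimpleGraph V) : ℕ :=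
  sSup {n | ∃ S : Set V, IsIndep G S ∧ S.ncard = n}

/-- The matching number `μ(G)`: maximum cardinality of a matching. -/
noncomputable def matchNum (G : SimpleGraph V) : ℕ :=
  sSup {n | ∃ M : Subgraph G, M.IsMatching ∧ M.edgeSet.ncard = n}

/-- `S` is a maximum independent set of `G`. -/
def IsMaxIndep (G : SimpleGraph V) (S : Set V) : Prop :=
  IsIndep G S ∧ S.ncard = indepNum G

/-- The critical difference `d(G) = max {|S| - |N(S)| : S independent}`. -/
noncomputable def critDiff (G : SimpleGraph V) : ℤ :=
  sSup {d : ℤ | ∃ S : Set V, IsIndep G S ∧ d = (S.ncard : ℤ) - ((nbhd G S).ncard : ℤ)}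

/-- `S` is a critical independent set: independent with `|S| - |N(S)| = d(G)`. -/
def IsCritIndep (G : SimpleGraph V) (S : Set V) : Prop :=
  IsIndep G S ∧ (S.ncard : ℤ) - ((nbhd G S).ncard : ℤ) = critDiff G

/-- `core G` is the intersection of all maximum independent sets of `G`. -/
def core (G : SimpleGraph V) : Set V := ⋂ S ∈ {S : Set V | IsMaxIndep G S}, S

/-- `G` is a König–Egerváry graph: `|V(G)| = α(G) + μ(G)`. -/
def KoenigEgervary (G : SimpleGraph V) : Prop :=
  Nat.card V = indepNum G + matchNum G

/-- `A` is a local maximum independent set of `G`: it is a maximum independent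
set of the subgraph of `G` induced by `N[A] = A ∪ N(A)`. -/
def IsLocalMaxIndep (G : SimpleGraph V) (A : Set V) : Prop :=
  IsMaxIndep (G.induce (A ∪ nbhd G A)) {x : ↥(A ∪ nbhd G A) | ↑x ∈ A}

/-
If `d(G) = 0`, a maximum independent set `S` satisfies `α = |S| ≤ |N(S)| ≤ n - α`, so the
König–Egerváry identity `n = α + μ` gives `n ≤ 2μ`; a maximum matching covers `2μ` vertices and
is therefore perfect. Conversely a perfect matching injects every `S` into `N(S)` (send a vertex
to its partner), so `|S| - |N(S)| ≤ 0`, while `S = ∅` shows `d(G) ≥ 0`.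
-/

theorem _root_.SimpleGraph.Subgraph.IsMatching.ncard_verts_eq_two_mul [Finite V]
    {G : SimpleGraph V} {M : G.Subgraph} (hM : M.IsMatching) :
    M.verts.ncard = 2 * M.edgeSet.ncard := by
  classical
  have := Fintype.ofFinite V
  have hfiber : ∀ e : M.edgeSet, (Finset.univ.filter (hM.toEdge · = e)).card = 2 := by
    rintro ⟨e, he⟩
    induction e using Sym2.ind with | h u v =>
    have hpre : (Finset.univ.filter (hM.toEdge · = ⟨s(u, v), he⟩) : Set M.verts)
        = hM.toEdge ⁻¹' {⟨s(u, v), he⟩} := by ext; simp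
    rw [← Set.ncard_coe_finset, hpre, hM.toEdge_preimage_singleton he, Set.ncard_pair]
    simpa using he.ne
  rw [← Nat.card_coe_set_eq, ← Nat.card_coe_set_eq, Nat.card_eq_fintype_card,
    Nat.card_eq_fintype_card, Fintype.card, Fintype.card,
    Finset.card_eq_sum_card_fiberwise (f := hM.toEdge) (t := Finset.univ) (by simp)]
  simp [hfiber, mul_comm]

variable {G : SimpleGraph V}

lemma isIndep_empty : IsIndep G ∅ :=
  Set.pairwise_empty _

@[simp]
lemma nbhd_empty : nbhd G ∅ = ∅ := by
  ext v
  simp [nbhd]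

lemma IsIndep.nbhd_subset_compl {S : Set V} (hS : IsIndep G S) : nbhd G S ⊆ Sᶜ := by
  rintro v ⟨w, hw, hvw⟩ hv
  exact hS hv hw hvw.ne hvw

section Finite

variable [Finite V]

lemma ncard_le_ncard_nbhd_of_isPerfectMatching {M : G.Subgraph}
    (hM : M.IsPerfectMatching) (S : Set V) : S.ncard ≤ (nbhd G S).ncard := by
  choose partner hpartner hunique using Subgraph.isPerfectMatching_iff.mp hM
  refine Set.ncard_le_ncard_of_injOn partner
    (fun v hv => ⟨v, hv, (hpartner v).adj_sub.symm⟩) (fun a _ b _ hab => ?_) (Set.toFinite _)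
  exact (hunique (partner a) a (hpartner a).symm).trans
    (hunique (partner a) b (hab ▸ (hpartner b).symm)).symm

lemma bddAbove_critDiff_set :
    BddAbove
      {d : ℤ | ∃ S : Set V, IsIndep G S ∧ d = (S.ncard : ℤ) - ((nbhd G S).ncard : ℤ)} := by
  refine ⟨Nat.card V, ?_⟩
  rintro d ⟨S, -, rfl⟩
  have := S.ncard_le_card
  omega

lemma IsIndep.sub_le_critDiff {S : Set V} (hS : IsIndep G S) :
    (S.ncard : ℤ) - (nbhd G S).ncard ≤ critDiff G :=
  le_csSup bddAbove_critDiff_set ⟨S, hS, rfl⟩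

lemma critDiff_nonneg : 0 ≤ critDiff G := by
  simpa using isIndep_empty.sub_le_critDiff

lemma critDiff_le_zero_of_isPerfectMatching {M : G.Subgraph} (hM : M.IsPerfectMatching) :
    critDiff G ≤ 0 := by
  refine csSup_le ⟨0, ∅, isIndep_empty, by simp⟩ ?_
  rintro d ⟨S, -, rfl⟩
  have := ncard_le_ncard_nbhd_of_isPerfectMatching hM S
  omega

lemma exists_isMaxIndep : ∃ S, IsMaxIndep G S :=
  Nat.sSup_mem (s := {n | ∃ S : Set V, IsIndep G S ∧ S.ncard = n})
    ⟨0, ∅, isIndep_empty, Set.ncard_empty V⟩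
    ⟨Nat.card V, by rintro n ⟨S, -, rfl⟩; exact S.ncard_le_card⟩

lemma exists_isMatching_ncard_edgeSet_eq_matchNum :
    ∃ M : G.Subgraph, M.IsMatching ∧ M.edgeSet.ncard = matchNum G :=
  Nat.sSup_mem (s := {n | ∃ M : G.Subgraph, M.IsMatching ∧ M.edgeSet.ncard = n})
    ⟨0, ⊥, fun v hv => hv.elim, by simp⟩
    ⟨Nat.card (Sym2 V), by rintro n ⟨M, -, rfl⟩; exact M.edgeSet.ncard_le_card⟩

lemma two_mul_indepNum_le_card_of_critDiff_le_zero (h : critDiff G ≤ 0) :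
    2 * indepNum G ≤ Nat.card V := by
  obtain ⟨S, hS, hScard⟩ := exists_isMaxIndep (G := G)
  have hdiff := hS.sub_le_critDiff
  have hnbhd := Set.ncard_le_ncard hS.nbhd_subset_compl
  have hcompl := Set.ncard_add_ncard_compl S
  omega

lemma exists_isPerfectMatching_of_card_le_two_mul_matchNum (h : Nat.card V ≤ 2 * matchNum G) :
    ∃ M : G.Subgraph, M.IsPerfectMatching := by
  obtain ⟨M, hM, hMcard⟩ := exists_isMatching_ncard_edgeSet_eq_matchNum (G := G)
  refine ⟨M, hM, fun v => ?_⟩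
  by_contra hv
  have hlt : M.verts.ncard < Nat.card V := Set.ncard_lt_card fun h' => hv (h' ▸ Set.mem_univ v)
  rw [hM.ncard_verts_eq_two_mul] at hlt
  omega

end Finite

/-- If `G` is a finite König–Egerváry graph, then `d(G) = 0` if and only if `G`
has a perfect matching. -/
theorem critDiff_eq_zero_iff_perfectMatching [Finite V] (G : SimpleGraph V)
    (hG : KoenigEgervary G) :
    critDiff G = 0 ↔ ∃ M : Subgraph G, M.IsPerfectMatching := by
  refine ⟨fun h => exists_isPerfectMatching_of_card_le_two_mul_matchNum ?_,
    fun ⟨M, hM⟩ => (critDiff_le_zero_of_isPerfectMatching hM).antisymm critDiff_nonneg⟩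
  have := two_mul_indepNum_le_card_of_critDiff_le_zero h.le
  rw [KoenigEgervary] at hG
  omega

end KEPaper
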